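/- arXiv:1308.6267 — 2 statements merged into one kernel-verified Lean document; each statement's English description precedes it below -/
import Mathlib

section
/- For nonnegative integers α ≤ β with β ≥ 1, σ > 2, L > 0, and r ∈ ℝ² with |r| ≤ (3/4)·√(α²+β²)/L, the sum over nonzero lattice points J ∈ (L⁻¹ℤ)² of ⟨r + αJ + βJ⊥⟩^{-σ} is bounded by C·min(L²/β², L^σ/β^σ), where ⟨x⟩ = √(1+|x|²), J⊥ is the rotation of J by π/2, and C depends only on σ. -/
/-!
The map `J ↦ αJ + βJ⊥` is `√(α² + β²)` times a rotation and nonzero points of `ℤ²` have `|j| ≥ 1`,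
so the hypothesis on `r` gives `|r + αJ + βJ⊥| ≥ c |j|` with `c = √(α² + β²) / (4L) ≥ β / (4L)`.
It remains to bound `∑_{j ≠ 0} ⟨c j⟩^{-σ}` by `K · min (c⁻², c^{-σ})`. For `c ≤ 1`, the inequality
`⟨(x, y)⟩² ≥ ⟨x⟩ ⟨y⟩` dominates the sum by the square of `∑_{k ∈ ℤ} ⟨c k⟩^{-σ/2}`, which comparison
with `∫ ⟨c y⟩^{-σ/2} dy` bounds by `O(1/c)`. For `c ≥ 1` and `j ≠ 0`, `⟨c j⟩² ≥ c² ⟨j⟩² / 2`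
extracts the factor `c^{-σ}` from a convergent sum.
-/

open MeasureTheory
noncomputable section

abbrev E2 := EuclideanSpace ℝ (Fin 2)

/-- Counterclockwise rotation by π/2 in the plane. -/
def rot (z : E2) : E2 := !₂[-(z 1), z 0]

/-- Japanese bracket ⟨x⟩ = √(1+|x|²). -/
def jap (x : E2) : ℝ := Real.sqrt (1 + ‖x‖^2)

/-- The lattice point L⁻¹·(j₁, j₂) of the rescaled lattice ℤ²_L = L⁻¹ℤ². -/
def latt (L : ℝ) (j : ℤ × ℤ) : E2 := !₂[(j.1 : ℝ)/L, (j.2 : ℝ)/L]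

def japPow (r y : ℝ) : ℝ := (1 + y ^ 2) ^ (-r / 2)

lemma japPow_nonneg (r y : ℝ) : 0 ≤ japPow r y := by unfold japPow; positivity

lemma japPow_zero (r : ℝ) : japPow r 0 = 1 := by simp [japPow]

lemma japPow_neg (r y : ℝ) : japPow r (-y) = japPow r y := by simp [japPow]

lemma antitoneOn_japPow_mul {r c : ℝ} (hr : 0 ≤ r) (hc : 0 ≤ c) :
    AntitoneOn (fun x => japPow r (c * x)) (Set.Ici 0) := by
  intro x hx y _ hxy
  have : c * x ≤ c * y := mul_le_mul_of_nonneg_left hxy hc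
  have : 0 ≤ c * x := mul_nonneg hc hx
  exact Real.rpow_le_rpow_of_nonpos (by positivity) (by gcongr) (by linarith)

lemma integrable_japPow {r : ℝ} (hr : 1 < r) : Integrable (japPow r) := by
  have := integrable_rpow_neg_one_add_norm_sq (E := ℝ) (μ := volume) (r := r) (by simpa using hr)
  simp only [Real.norm_eq_abs, sq_abs] at this
  exact this

lemma integral_japPow_mul {r c : ℝ} (hc : 0 < c) :
    ∫ x, japPow r (c * x) = (∫ y, japPow r y) / c := by
  rw [Measure.integral_comp_mul_left (japPow r) c, abs_of_pos (inv_pos.2 hc), smul_eq_mul,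
    inv_mul_eq_div]

lemma sum_range_japPow_mul_succ_le {r c : ℝ} (hr : 1 < r) (hc : 0 < c) (n : ℕ) :
    ∑ i ∈ Finset.range n, japPow r (c * (i + 1)) ≤ (∫ y, japPow r y) / c := by
  have hmono : AntitoneOn (fun x => japPow r (c * x)) (Set.Icc 0 (0 + n)) :=
    (antitoneOn_japPow_mul (by linarith) hc.le).mono Set.Icc_subset_Ici_self
  calc ∑ i ∈ Finset.range n, japPow r (c * (i + 1))
      ≤ ∫ x in (0 : ℝ)..0 + n, japPow r (c * x) := by
        simpa using hmono.sum_le_integral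
    _ ≤ ∫ x, japPow r (c * x) := by
        rw [intervalIntegral.integral_of_le (by positivity)]
        exact setIntegral_le_integral ((integrable_japPow hr).comp_mul_left' hc.ne')
          (Filter.Eventually.of_forall fun x => japPow_nonneg r _)
    _ = (∫ y, japPow r y) / c := integral_japPow_mul hc

lemma summable_japPow_mul_succ {r c : ℝ} (hr : 1 < r) (hc : 0 < c) :
    Summable (fun n : ℕ => japPow r (c * (n + 1))) :=
  summable_of_sum_range_le (fun _ => japPow_nonneg r _) (sum_range_japPow_mul_succ_le hr hc)

lemma summable_int_japPow_mul {r c : ℝ} (hr : 1 < r) (hc : 0 < c) :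
    Summable (fun k : ℤ => japPow r (c * k)) := by
  have hnat : Summable (fun n : ℕ => japPow r (c * n)) :=
    (summable_nat_add_iff 1).1 (by simpa using summable_japPow_mul_succ hr hc)
  exact .of_nat_of_neg (by simpa using hnat) (by simpa [japPow_neg] using hnat)

lemma tsum_int_japPow_mul_le {r c : ℝ} (hr : 1 < r) (hc : 0 < c) :
    ∑' k : ℤ, japPow r (c * k) ≤ 1 + 2 * ((∫ y, japPow r y) / c) := by
  have heven : Function.Even (fun k : ℤ => japPow r (c * k)) := fun k => by
    simp [japPow_neg]
  rw [tsum_int_eq_zero_add_two_mul_tsum_pnat heven (summable_int_japPow_mul hr hc),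
    tsum_pnat_eq_tsum_succ (f := fun n : ℕ => japPow r (c * ((n : ℤ) : ℝ)))]
  simp only [Int.cast_zero, mul_zero, japPow_zero, nsmul_eq_mul, Nat.cast_ofNat]
  push_cast
  gcongr 1 + 2 * ?_
  exact Real.tsum_le_of_sum_range_le (fun _ => japPow_nonneg r _)
    (sum_range_japPow_mul_succ_le hr hc)

lemma rpow_neg_one_add_sq_add_sq_le {r : ℝ} (hr : 0 ≤ r) (x y : ℝ) :
    (1 + x ^ 2 + y ^ 2) ^ (-r / 2) ≤ japPow (r / 2) x * japPow (r / 2) y := by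
  have hprod : (1 + x ^ 2) * (1 + y ^ 2) ≤ (1 + x ^ 2 + y ^ 2) ^ 2 := by
    nlinarith [sq_nonneg x, sq_nonneg y]
  calc (1 + x ^ 2 + y ^ 2) ^ (-r / 2) = ((1 + x ^ 2 + y ^ 2) ^ 2) ^ (-(r / 2) / 2) := by
        rw [← Real.rpow_natCast (1 + x ^ 2 + y ^ 2) 2, ← Real.rpow_mul (by positivity)]
        congr 1; push_cast; ring
    _ ≤ ((1 + x ^ 2) * (1 + y ^ 2)) ^ (-(r / 2) / 2) :=
        Real.rpow_le_rpow_of_nonpos (by positivity) hprod (by linarith)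
    _ = japPow (r / 2) x * japPow (r / 2) y := Real.mul_rpow (by positivity) (by positivity)

def japLattice (σ c : ℝ) (j : ℤ × ℤ) : ℝ :=
  (1 + c ^ 2 * ((j.1 : ℝ) ^ 2 + (j.2 : ℝ) ^ 2)) ^ (-σ / 2)

lemma japLattice_nonneg (σ c : ℝ) (j : ℤ × ℤ) : 0 ≤ japLattice σ c j := by
  unfold japLattice; positivity

lemma japLattice_le_mul {σ : ℝ} (hσ : 0 ≤ σ) (c : ℝ) (j : ℤ × ℤ) :
    japLattice σ c j ≤ japPow (σ / 2) (c * j.1) * japPow (σ / 2) (c * j.2) := by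
  have := rpow_neg_one_add_sq_add_sq_le hσ (c * j.1) (c * j.2)
  rwa [mul_pow, mul_pow, add_assoc, ← mul_add] at this

lemma summable_japLattice {σ c : ℝ} (hσ : 2 < σ) (hc : 0 < c) : Summable (japLattice σ c) := by
  have h := summable_int_japPow_mul (r := σ / 2) (by linarith) hc
  exact (h.mul_of_nonneg h (fun _ => japPow_nonneg _ _) (fun _ => japPow_nonneg _ _))
    |>.of_nonneg_of_le (japLattice_nonneg σ c) (japLattice_le_mul (by linarith) c)

lemma tsum_japLattice_le {σ c : ℝ} (hσ : 2 < σ) (hc : 0 < c) :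
    ∑' j, japLattice σ c j ≤ (1 + 2 * ((∫ y, japPow (σ / 2) y) / c)) ^ 2 := by
  have h := summable_int_japPow_mul (r := σ / 2) (by linarith) hc
  have hnorm : Summable (fun k : ℤ => ‖japPow (σ / 2) (c * k)‖) := by
    simpa [Real.norm_eq_abs, abs_of_nonneg (japPow_nonneg _ _)] using h
  calc ∑' j, japLattice σ c j
      ≤ ∑' j : ℤ × ℤ, japPow (σ / 2) (c * j.1) * japPow (σ / 2) (c * j.2) :=
        (summable_japLattice hσ hc).tsum_le_tsum (japLattice_le_mul (by linarith) c)
          (h.mul_of_nonneg h (fun _ => japPow_nonneg _ _) (fun _ => japPow_nonneg _ _))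
    _ = (∑' k : ℤ, japPow (σ / 2) (c * k)) ^ 2 := by
        rw [sq, tsum_mul_tsum_of_summable_norm hnorm hnorm]
    _ ≤ _ := by
        gcongr
        · exact tsum_nonneg fun _ => japPow_nonneg _ _
        · exact tsum_int_japPow_mul_le (by linarith) hc

lemma one_le_sq_add_sq_of_ne_zero {j : ℤ × ℤ} (hj : j ≠ 0) :
    1 ≤ (j.1 : ℝ) ^ 2 + (j.2 : ℝ) ^ 2 := by
  obtain ⟨m, n⟩ := j
  have hpos : 0 < m ^ 2 + n ^ 2 := by
    rcases eq_or_ne m 0 with rfl | hm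
    · have hn : n ≠ 0 := by rintro rfl; exact hj rfl
      positivity
    · positivity
  exact_mod_cast (by linarith : (1 : ℤ) ≤ m ^ 2 + n ^ 2)

lemma japLattice_le_of_one_le {σ c : ℝ} (hσ : 0 ≤ σ) (hc : 1 ≤ c) {j : ℤ × ℤ} (hj : j ≠ 0) :
    japLattice σ c j ≤ 2 ^ (σ / 2) * (c ^ σ)⁻¹ * japLattice σ 1 j := by
  set ρ := (j.1 : ℝ) ^ 2 + (j.2 : ℝ) ^ 2
  have hρ : 1 ≤ ρ := one_le_sq_add_sq_of_ne_zero hj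
  have hc0 : 0 < c := by linarith
  have hscale : (c ^ 2 / 2) ^ (-σ / 2) = 2 ^ (σ / 2) * (c ^ σ)⁻¹ := by
    rw [Real.div_rpow (by positivity) (by norm_num), ← Real.rpow_natCast c 2,
      ← Real.rpow_mul hc0.le, show (2 : ℕ) * (-σ / 2) = -σ by push_cast; ring, neg_div,
      Real.rpow_neg hc0.le, Real.rpow_neg (by norm_num)]
    field_simp
  calc japLattice σ c j ≤ (c ^ 2 / 2 * (1 + ρ)) ^ (-σ / 2) :=
        Real.rpow_le_rpow_of_nonpos (by positivity) (by nlinarith) (by linarith)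
    _ = 2 ^ (σ / 2) * (c ^ σ)⁻¹ * japLattice σ 1 j := by
        rw [Real.mul_rpow (by positivity) (by positivity), hscale, japLattice, one_pow, one_mul]

lemma exists_tsum_japLattice_le {σ : ℝ} (hσ : 2 < σ) :
    ∃ K, 0 < K ∧ ∀ c, 0 < c →
      ∑' j : {j : ℤ × ℤ // j ≠ 0}, japLattice σ c j ≤ K * min (c ^ 2)⁻¹ (c ^ σ)⁻¹ := by
  set M := (1 + 2 * ∫ y, japPow (σ / 2) y) ^ 2
  have hI : 0 ≤ ∫ y, japPow (σ / 2) y := integral_nonneg fun _ => japPow_nonneg _ _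
  have h2σ : 1 ≤ (2 : ℝ) ^ (σ / 2) := Real.one_le_rpow (by norm_num) (by linarith)
  have hsub : ∀ c, 0 < c →
      ∑' j : {j : ℤ × ℤ // j ≠ 0}, japLattice σ c j ≤ ∑' j, japLattice σ c j := fun c hc =>
    (summable_japLattice hσ hc).tsum_subtype_le _ _ (japLattice_nonneg σ c)
  refine ⟨2 ^ (σ / 2) * M, by positivity, fun c hc => ?_⟩
  rcases le_total c 1 with hc1 | hc1
  · have hmin : min (c ^ 2)⁻¹ (c ^ σ)⁻¹ = (c ^ 2)⁻¹ := by
      refine min_eq_left (inv_anti₀ (by positivity) ?_)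
      rw [← Real.rpow_natCast]
      exact Real.rpow_le_rpow_of_exponent_ge hc hc1 (by norm_num; linarith)
    calc ∑' j : {j : ℤ × ℤ // j ≠ 0}, japLattice σ c j
        ≤ (1 + 2 * ((∫ y, japPow (σ / 2) y) / c)) ^ 2 :=
          (hsub c hc).trans (tsum_japLattice_le hσ hc)
      _ ≤ M * (c ^ 2)⁻¹ := by
          rw [← inv_pow, ← mul_pow]
          gcongr
          rw [add_mul, one_mul, mul_assoc, ← div_eq_mul_inv]
          gcongr
          exact one_le_inv_iff₀.2 ⟨hc, hc1⟩
      _ ≤ 2 ^ (σ / 2) * M * min (c ^ 2)⁻¹ (c ^ σ)⁻¹ := by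
          rw [hmin]; gcongr; exact le_mul_of_one_le_left (by positivity) h2σ
  · have hmin : min (c ^ 2)⁻¹ (c ^ σ)⁻¹ = (c ^ σ)⁻¹ := by
      refine min_eq_right (inv_anti₀ (by positivity) ?_)
      rw [← Real.rpow_natCast]
      exact Real.rpow_le_rpow_of_exponent_le hc1 (by norm_num; linarith)
    have hS1 := (summable_japLattice hσ one_pos).subtype {j | j ≠ 0}
    calc ∑' j : {j : ℤ × ℤ // j ≠ 0}, japLattice σ c j
        ≤ ∑' j : {j : ℤ × ℤ // j ≠ 0}, 2 ^ (σ / 2) * (c ^ σ)⁻¹ * japLattice σ 1 j :=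
          ((summable_japLattice hσ hc).subtype _).tsum_le_tsum
            (fun j => japLattice_le_of_one_le (by linarith) hc1 j.2) (hS1.mul_left _)
      _ = 2 ^ (σ / 2) * (c ^ σ)⁻¹ * ∑' j : {j : ℤ × ℤ // j ≠ 0}, japLattice σ 1 j :=
          tsum_mul_left
      _ ≤ 2 ^ (σ / 2) * (c ^ σ)⁻¹ * M := by
          gcongr
          simpa using (hsub 1 one_pos).trans (tsum_japLattice_le hσ one_pos)
      _ = 2 ^ (σ / 2) * M * min (c ^ 2)⁻¹ (c ^ σ)⁻¹ := by rw [hmin]; ring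

lemma norm_smul_add_smul_rot (a b : ℝ) (x : E2) :
    ‖a • x + b • rot x‖ = √(a ^ 2 + b ^ 2) * ‖x‖ := by
  rw [EuclideanSpace.norm_eq, EuclideanSpace.norm_eq, ← Real.sqrt_mul (by positivity)]
  congr 1
  simp [Fin.sum_univ_two, rot]
  ring

lemma norm_latt (L : ℝ) (j : ℤ × ℤ) :
    ‖latt L j‖ = √((j.1 : ℝ) ^ 2 + (j.2 : ℝ) ^ 2) / |L| := by
  rw [EuclideanSpace.norm_eq, ← Real.sqrt_sq_eq_abs, ← Real.sqrt_div' _ (sq_nonneg L)]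
  congr 1
  simp [Fin.sum_univ_two, latt, div_pow]
  ring

lemma mul_sqrt_le_norm_add_smul_latt {a b L : ℝ} (hL : 0 < L) {r : E2}
    (hr : ‖r‖ ≤ 3 / 4 * √(a ^ 2 + b ^ 2) / L) {j : ℤ × ℤ} (hj : j ≠ 0) :
    √(a ^ 2 + b ^ 2) / (4 * L) * √((j.1 : ℝ) ^ 2 + (j.2 : ℝ) ^ 2)
      ≤ ‖r + a • latt L j + b • rot (latt L j)‖ := by
  set s := √(a ^ 2 + b ^ 2)
  set ρ := √((j.1 : ℝ) ^ 2 + (j.2 : ℝ) ^ 2)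
  have hρ : 1 ≤ ρ := Real.one_le_sqrt.2 (one_le_sq_add_sq_of_ne_zero hj)
  have hw : ‖a • latt L j + b • rot (latt L j)‖ = s * ρ / L := by
    rw [norm_smul_add_smul_rot, norm_latt, abs_of_pos hL, mul_div_assoc]
  have htri := norm_sub_le (r + (a • latt L j + b • rot (latt L j))) r
  rw [add_sub_cancel_left, hw] at htri
  rw [add_assoc]
  have : 0 ≤ s / L * (ρ - 1) := mul_nonneg (by positivity) (by linarith)
  calc s / (4 * L) * ρ = s * ρ / L - 3 / 4 * s / L - 3 / 4 * (s / L * (ρ - 1)) := by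
        field_simp; ring
    _ ≤ _ := by linarith

lemma jap_rpow_neg_le {σ t : ℝ} (hσ : 0 ≤ σ) (ht : 0 ≤ t) {v : E2} (h : t ≤ ‖v‖) :
    jap v ^ (-σ) ≤ (1 + t ^ 2) ^ (-σ / 2) := by
  rw [jap, Real.sqrt_eq_rpow, ← Real.rpow_mul (by positivity), one_div_mul_eq_div, neg_div]
  exact Real.rpow_le_rpow_of_nonpos (by positivity) (by gcongr) (by linarith)

lemma min_inv_sq_inv_rpow_le {σ c b L : ℝ} (hσ : 2 ≤ σ) (hb : 0 < b) (hL : 0 < L)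
    (hc : b / (4 * L) ≤ c) :
    min (c ^ 2)⁻¹ (c ^ σ)⁻¹ ≤ 4 ^ σ * min (L ^ 2 / b ^ 2) (L ^ σ / b ^ σ) := by
  have hx : 0 < b / (4 * L) := by positivity
  have h16 : (16 : ℝ) ≤ 4 ^ σ := by
    calc (16 : ℝ) = 4 ^ (2 : ℝ) := by norm_num
      _ ≤ 4 ^ σ := Real.rpow_le_rpow_of_exponent_le (by norm_num) hσ
  rw [mul_min_of_nonneg _ _ (by positivity)]
  refine min_le_min ?_ ?_
  · calc (c ^ 2)⁻¹ ≤ ((b / (4 * L)) ^ 2)⁻¹ := by gcongr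
      _ = 16 * (L ^ 2 / b ^ 2) := by field_simp; ring
      _ ≤ 4 ^ σ * (L ^ 2 / b ^ 2) := by gcongr
  · calc (c ^ σ)⁻¹ ≤ ((b / (4 * L)) ^ σ)⁻¹ := by gcongr
      _ = 4 ^ σ * (L ^ σ / b ^ σ) := by
        rw [Real.div_rpow hb.le (by positivity), Real.mul_rpow (by norm_num) hL.le]
        field_simp

/-- Lemma: for 0 ≤ α ≤ β, β ≥ 1, σ > 2, and |r| ≤ (3/4)√(α²+β²)/L, the lattice sum
Σ_{J ∈ (ℤ²_L)*} ⟨r + αJ + βJ⊥⟩^{-σ} is bounded by C·min(L²/β², L^σ/β^σ),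
with C depending only on σ. -/
theorem stmt0 (σ : ℝ) (hσ : 2 < σ) :
    ∃ C : ℝ, 0 < C ∧ ∀ (a b : ℕ) (L : ℝ) (r : E2),
      a ≤ b → 1 ≤ b → 0 < L →
      ‖r‖ ≤ (3/4) * Real.sqrt ((a : ℝ)^2 + (b : ℝ)^2) / L →
      (∑' j : {j : ℤ × ℤ // j ≠ 0},
          jap (r + (a : ℝ) • latt L j.1 + (b : ℝ) • rot (latt L j.1)) ^ (-σ))
        ≤ C * min (L^2 / (b : ℝ)^2) (L ^ σ / (b : ℝ) ^ σ) := by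
  obtain ⟨K, hK, hsum⟩ := exists_tsum_japLattice_le hσ
  refine ⟨K * 4 ^ σ, by positivity, fun a b L r _ hb hL hr => ?_⟩
  have hb0 : (0 : ℝ) < b := by exact_mod_cast hb
  set c := √((a : ℝ) ^ 2 + (b : ℝ) ^ 2) / (4 * L)
  have hbc : (b : ℝ) / (4 * L) ≤ c :=
    div_le_div_of_nonneg_right (Real.le_sqrt_of_sq_le (by nlinarith)) (by positivity)
  have hc : 0 < c := lt_of_lt_of_le (by positivity) hbc
  have hbound : ∀ j : {j : ℤ × ℤ // j ≠ 0},
      jap (r + (a : ℝ) • latt L j.1 + (b : ℝ) • rot (latt L j.1)) ^ (-σ) ≤ japLattice σ c j := by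
    intro j
    refine (jap_rpow_neg_le (by linarith) (by positivity)
      (mul_sqrt_le_norm_add_smul_latt hL hr j.2)).trans_eq ?_
    rw [japLattice, mul_pow, Real.sq_sqrt (by positivity)]
  have hS := (summable_japLattice hσ hc).subtype {j | j ≠ 0}
  have hnonneg : ∀ j : {j : ℤ × ℤ // j ≠ 0},
      0 ≤ jap (r + (a : ℝ) • latt L j.1 + (b : ℝ) • rot (latt L j.1)) ^ (-σ) :=
    fun _ => Real.rpow_nonneg (Real.sqrt_nonneg _) _
  calc _ ≤ ∑' j : {j : ℤ × ℤ // j ≠ 0}, japLattice σ c j :=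
        (hS.of_nonneg_of_le hnonneg hbound).tsum_le_tsum hbound hS
    _ ≤ K * min (c ^ 2)⁻¹ (c ^ σ)⁻¹ := hsum c hc
    _ ≤ K * (4 ^ σ * min (L ^ 2 / b ^ 2) (L ^ σ / b ^ σ)) := by
        gcongr; exact min_inv_sq_inv_rpow_le hσ.le hb0 hL hbc
    _ = _ := by ring
end
end

section
/- If R ≥ L³ (more precisely R ≫ L³), then any arc of a circle of radius R in ℝ² contained in a box of side length L contains at most two points of the integer lattice ℤ². -/
/-!
Twice the area of a triangle with vertices in `ℤ²` is a nonzero integer `D` (nonzero because three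
distinct points of a circle are never collinear), while the circumradius formula `abc = 4 R · area`
gives `(2 R D)² = a² b² c²`. For three points of a circle of radius `R` in a box of side `L`, each
`a², b², c² ≤ 2 L²`, hence `4 R² ≤ 8 L⁶`, which is impossible once `R ≥ 2 L³`.
-/

/-- `abc = 4 R · area` for the triangle `0, p, q` inscribed in the circle of radius `R` centred
at `w`. -/
lemma circumradius_formula {p₁ p₂ q₁ q₂ w₁ w₂ R : ℝ} (hw : w₁ ^ 2 + w₂ ^ 2 = R ^ 2)
    (hp : (p₁ - w₁) ^ 2 + (p₂ - w₂) ^ 2 = R ^ 2) (hq : (q₁ - w₁) ^ 2 + (q₂ - w₂) ^ 2 = R ^ 2) :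
    (2 * R * (p₁ * q₂ - p₂ * q₁)) ^ 2 =
      (p₁ ^ 2 + p₂ ^ 2) * (q₁ ^ 2 + q₂ ^ 2) * ((p₁ - q₁) ^ 2 + (p₂ - q₂) ^ 2) := by
  set det := p₁ * q₂ - p₂ * q₁
  -- Cramer's rule for the linear system `p · 2w = |p|²`, `q · 2w = |q|²`.
  have h₁ : det * (2 * w₁) = (p₁ ^ 2 + p₂ ^ 2) * q₂ - (q₁ ^ 2 + q₂ ^ 2) * p₂ := by
    linear_combination -q₂ * hp + p₂ * hq + (q₂ - p₂) * hw
  have h₂ : det * (2 * w₂) = (q₁ ^ 2 + q₂ ^ 2) * p₁ - (p₁ ^ 2 + p₂ ^ 2) * q₁ := by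
    linear_combination -p₁ * hq + q₁ * hp + (p₁ - q₁) * hw
  calc (2 * R * det) ^ 2 = (det * (2 * w₁)) ^ 2 + (det * (2 * w₂)) ^ 2 := by
        linear_combination -4 * det ^ 2 * hw
    _ = _ := by rw [h₁, h₂]; ring

def sqDist (a b : ℤ × ℤ) : ℤ := (a.1 - b.1) ^ 2 + (a.2 - b.2) ^ 2

lemma sqDist_pos {a b : ℤ × ℤ} (hab : a ≠ b) : 0 < sqDist a b := by
  have : a.1 - b.1 ≠ 0 ∨ a.2 - b.2 ≠ 0 := by
    contrapose! hab
    ext <;> omega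
  rcases this with h | h <;> unfold sqDist <;> positivity

lemma sq_sub_le_of_mem_Icc {x y t L : ℝ} (hx : x ∈ Set.Icc t (t + L)) (hy : y ∈ Set.Icc t (t + L)) :
    (x - y) ^ 2 ≤ L ^ 2 :=
  sq_le_sq' (by linarith [hx.1, hy.2]) (by linarith [hx.2, hy.1])

lemma sqDist_le_of_mem_box {a b : ℤ × ℤ} {x₀ y₀ L : ℝ}
    (ha : (a.1 : ℝ) ∈ Set.Icc x₀ (x₀ + L) ∧ (a.2 : ℝ) ∈ Set.Icc y₀ (y₀ + L))
    (hb : (b.1 : ℝ) ∈ Set.Icc x₀ (x₀ + L) ∧ (b.2 : ℝ) ∈ Set.Icc y₀ (y₀ + L)) :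
    (sqDist a b : ℝ) ≤ 2 * L ^ 2 := by
  push_cast [sqDist]
  linarith [sq_sub_le_of_mem_Icc ha.1 hb.1, sq_sub_le_of_mem_Icc ha.2 hb.2]

lemma four_mul_sq_le_of_concyclic {a b d : ℤ × ℤ} (hab : a ≠ b) (had : a ≠ d) (hbd : b ≠ d)
    {c : ℝ × ℝ} {R : ℝ} (ha : ((a.1 : ℝ) - c.1) ^ 2 + ((a.2 : ℝ) - c.2) ^ 2 = R ^ 2)
    (hb : ((b.1 : ℝ) - c.1) ^ 2 + ((b.2 : ℝ) - c.2) ^ 2 = R ^ 2)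
    (hd : ((d.1 : ℝ) - c.1) ^ 2 + ((d.2 : ℝ) - c.2) ^ 2 = R ^ 2) :
    4 * R ^ 2 ≤ (sqDist a b * sqDist a d * sqDist b d : ℤ) := by
  set D : ℤ := (b.1 - a.1) * (d.2 - a.2) - (b.2 - a.2) * (d.1 - a.1)
  have harea : (2 * R * D) ^ 2 = (sqDist a b * sqDist a d * sqDist b d : ℤ) := by
    have := circumradius_formula (p₁ := (b.1 : ℝ) - a.1) (p₂ := (b.2 : ℝ) - a.2)
      (q₁ := (d.1 : ℝ) - a.1) (q₂ := (d.2 : ℝ) - a.2) (w₁ := c.1 - a.1) (w₂ := c.2 - a.2) (R := R)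
      (by linear_combination ha) (by linear_combination hb) (by linear_combination hd)
    push_cast [D, sqDist]
    linear_combination this
  have hD : D ≠ 0 := by
    rintro hD
    have hprod := mul_pos (mul_pos (sqDist_pos hab) (sqDist_pos had)) (sqDist_pos hbd)
    have hzero : ((sqDist a b * sqDist a d * sqDist b d : ℤ) : ℝ) = 0 := by simp [← harea, hD]
    exact hprod.ne' (by exact_mod_cast hzero)
  have hD₁ : (1 : ℝ) ≤ (D : ℝ) ^ 2 := mod_cast (one_le_sq_iff_one_le_abs _).mpr (Int.one_le_abs hD)
  calc 4 * R ^ 2 = 4 * R ^ 2 * 1 := (mul_one _).symm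
    _ ≤ 4 * R ^ 2 * (D : ℝ) ^ 2 := by gcongr
    _ = _ := by rw [← harea]; ring

lemma Set.ncard_le_two_of_forall_not_three {α : Type*} {s : Set α}
    (h : ∀ a ∈ s, ∀ b ∈ s, ∀ d ∈ s, a ≠ b → a ≠ d → b ≠ d → False) : s.ncard ≤ 2 := by
  by_contra! hs
  obtain ⟨a, b, d, ha, hb, hd, hab, had, hbd⟩ :=
    (Set.two_lt_ncard_iff (Set.finite_of_ncard_pos (by omega))).mp hs
  exact h a ha b hb d hd hab had hbd

/-- Jarnick's argument: there is C > 0 such that whenever R ≥ C·L³, any arc of a circle of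
radius R contained in an (axis-parallel) box of side L contains at most two integer points. -/
theorem stmt7 :
    ∃ C : ℝ, 0 < C ∧ ∀ (c : ℝ × ℝ) (R L x₀ y₀ : ℝ), 0 < L → C * L ^ 3 ≤ R →
      Set.ncard {z : ℤ × ℤ |
          ((z.1 : ℝ) - c.1)^2 + ((z.2 : ℝ) - c.2)^2 = R^2 ∧
          (z.1 : ℝ) ∈ Set.Icc x₀ (x₀ + L) ∧ (z.2 : ℝ) ∈ Set.Icc y₀ (y₀ + L)}
        ≤ 2 := by
  refine ⟨2, two_pos, fun c R L x₀ y₀ hL hR => ?_⟩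
  refine Set.ncard_le_two_of_forall_not_three ?_
  rintro a ⟨ha, haL⟩ b ⟨hb, hbL⟩ d ⟨hd, hdL⟩ hab had hbd
  have hlower := four_mul_sq_le_of_concyclic hab had hbd ha hb hd
  have hupper : ((sqDist a b * sqDist a d * sqDist b d : ℤ) : ℝ) ≤
      2 * L ^ 2 * (2 * L ^ 2) * (2 * L ^ 2) := by
    have : (0 : ℝ) ≤ sqDist a d := mod_cast (sqDist_pos had).le
    have : (0 : ℝ) ≤ sqDist b d := mod_cast (sqDist_pos hbd).le
    push_cast
    gcongr
    · exact sqDist_le_of_mem_box haL hbL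
    · exact sqDist_le_of_mem_box haL hdL
    · exact sqDist_le_of_mem_box hbL hdL
  have hR2 : (2 * L ^ 3) ^ 2 ≤ R ^ 2 := pow_le_pow_left₀ (by positivity) hR 2
  linarith [pow_pos hL 6]
end
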